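/- For every non-negative integer n there exists an integer matrix S_n ∈ ℤ^{2^n × 2^n} with det S_n = ±1 such that V_n S_n = A_n. -/

import Mathlib

/-- σ(n,k) from the paper: σ(0,1)=1 and, with d = 2^n, σ(n+1,k)=σ(n,k) for 1 ≤ k ≤ d,
σ(n+1,k)=2d+1−σ(n,k−d) for d+1 ≤ k ≤ 2d. -/
def sigmaCF : ℕ → ℕ → ℤ
  | 0, _ => 1
  | n + 1, k => if k ≤ 2 ^ n then sigmaCF n k else 2 * 2 ^ n + 1 - sigmaCF n (k - 2 ^ n)

/-- ξ_{n,k} = 2 cos(π(2σ(n,k) − 1)/2^{n+1}). -/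
noncomputable def xiCF (n k : ℕ) : ℝ :=
  2 * Real.cos (Real.pi * (2 * (sigmaCF n k : ℝ) - 1) / 2 ^ (n + 1))

/-- D_n = diag(ξ_{n+1,1}, …, ξ_{n+1,2^n}). -/
noncomputable def DCF (n : ℕ) : Matrix (Fin (2 ^ n)) (Fin (2 ^ n)) ℝ :=
  Matrix.diagonal fun i => xiCF (n + 1) (i.val + 1)

/-- A_0 = (1), A_{n+1} = [[A_n, D_n A_n], [A_n, −D_n A_n]]. -/
noncomputable def ACF : (n : ℕ) → Matrix (Fin (2 ^ n)) (Fin (2 ^ n)) ℝ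
  | 0 => 1
  | n + 1 =>
    Matrix.reindex (finSumFinEquiv.trans (finCongr (by rw [pow_succ, mul_two])))
      (finSumFinEquiv.trans (finCongr (by rw [pow_succ, mul_two])))
      (Matrix.fromBlocks (ACF n) (DCF n * ACF n) (ACF n) (-(DCF n * ACF n)))

/-- V_n: Vandermonde matrix with (i,j)-entry ξ_{n,i}^{j−1}. -/
noncomputable def VCF (n : ℕ) : Matrix (Fin (2 ^ n)) (Fin (2 ^ n)) ℝ :=
  Matrix.of fun i j => xiCF n (i.val + 1) ^ (j.val)

/-! ### Auxiliary lemmas -/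

/-- The binomial transition matrix `(i,j) ↦ C(j,i) a^(j-i)` (upper triangular). -/
def tgenCF {R : Type*} [CommRing R] (m : ℕ) (a : R) : Matrix (Fin m) (Fin m) R :=
  Matrix.of fun i j =>
    if i.val ≤ j.val then (j.val.choose i.val : R) * a ^ (j.val - i.val) else 0

theorem tgenCF_mul {R : Type*} [CommRing R] (m : ℕ) (a b : R) :
    tgenCF m a * tgenCF m b = tgenCF m (a + b) := by
  ext i j
  simp only [tgenCF, Matrix.mul_apply, Matrix.of_apply]
  set g : ℕ → R := fun t => if i.val ≤ t ∧ t ≤ j.val then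
      ((t.choose i.val : R) * a ^ (t - i.val)) * ((j.val.choose t : R) * b ^ (j.val - t))
      else 0 with hg
  have key : ∀ k : Fin m,
      (if i.val ≤ k.val then (k.val.choose i.val : R) * a ^ (k.val - i.val) else 0) *
        (if k.val ≤ j.val then (j.val.choose k.val : R) * b ^ (j.val - k.val) else 0) =
      g k.val := by
    intro k
    rw [hg]; beta_reduce
    by_cases h1 : i.val ≤ k.val
    · by_cases h2 : k.val ≤ j.val
      · rw [if_pos h1, if_pos h2, if_pos (⟨h1, h2⟩ : i.val ≤ k.val ∧ k.val ≤ j.val)]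
      · rw [if_pos h1, if_neg h2, if_neg (by omega : ¬(i.val ≤ k.val ∧ k.val ≤ j.val)), mul_zero]
    · rw [if_neg h1, if_neg (by omega : ¬(i.val ≤ k.val ∧ k.val ≤ j.val)), zero_mul]
  rw [Finset.sum_congr rfl fun k _ => key k]
  rw [Fin.sum_univ_eq_sum_range g m]
  rcases le_or_gt i.val j.val with hij | hij
  · rw [if_pos hij]
    rw [← Finset.sum_subset (Finset.range_subset_range.2 (Nat.succ_le_of_lt j.isLt))
      (fun x _ hx => if_neg (by simp only [Finset.mem_range] at hx; omega))]
    rw [Finset.range_eq_Ico, ← Finset.sum_subset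
      (Finset.Ico_subset_Ico (Nat.zero_le i.val) le_rfl)
      (fun x hx hx' => if_neg (by simp only [Finset.mem_Ico] at hx hx'; omega))]
    rw [Finset.sum_Ico_eq_sum_range]
    have hjj : j.val + 1 - i.val = (j.val - i.val) + 1 := by omega
    rw [hjj, add_pow, Finset.mul_sum]
    refine Finset.sum_congr rfl fun t ht => ?_
    simp only [Finset.mem_range] at ht
    rw [if_pos (by omega : i.val ≤ i.val + t ∧ i.val + t ≤ j.val)]
    have hch : (j.val.choose (i.val + t)) * ((i.val + t).choose i.val)
        = (j.val.choose i.val) * ((j.val - i.val).choose t) := by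
      have := Nat.choose_mul (n := j.val) (by omega : i.val ≤ i.val + t)
      simpa using this
    have h1 : i.val + t - i.val = t := by omega
    have h2 : j.val - (i.val + t) = j.val - i.val - t := by omega
    rw [h1, h2]
    have hc : ((j.val.choose (i.val + t) : R)) * (((i.val + t).choose i.val : R))
        = ((j.val.choose i.val : R)) * (((j.val - i.val).choose t : R)) := by
      exact_mod_cast congrArg (fun x : ℕ => (x : R)) hch
    linear_combination (a ^ t * b ^ (j.val - i.val - t)) * hc
  · rw [if_neg (by omega)]
    refine Finset.sum_eq_zero fun k hk => ?_
    rw [hg]; beta_reduce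
    exact if_neg (by omega)

theorem tgenCF_zero {R : Type*} [CommRing R] (m : ℕ) : tgenCF m (0 : R) = 1 := by
  ext i j
  rcases eq_or_ne i j with rfl | hne
  · simp [tgenCF]
  · rw [Matrix.one_apply_ne hne]
    simp only [tgenCF, Matrix.of_apply]
    split_ifs with h
    · have : j.val - i.val ≠ 0 := by
        have := Fin.val_ne_of_ne hne; omega
      rw [zero_pow this, mul_zero]
    · rfl

theorem tgenCF_det {R : Type*} [CommRing R] (m : ℕ) (a : R) : (tgenCF m a).det = 1 := by
  rw [Matrix.det_of_upperTriangular (by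
    intro i j hji
    simp only [tgenCF, Matrix.of_apply, id] at *
    rw [if_neg (by omega)])]
  simp [tgenCF]

theorem tgenCF_map (m : ℕ) (a : ℤ) :
    (tgenCF m a).map (Int.cast : ℤ → ℝ) = tgenCF m (a : ℝ) := by
  ext i j
  simp only [tgenCF, Matrix.map_apply, Matrix.of_apply]
  split_ifs <;> push_cast <;> ring

/-- The interleaving equivalence `inl q ↦ 2q`, `inr q ↦ 2q+1`. -/
def itlvCF (m : ℕ) : Fin m ⊕ Fin m ≃ Fin (2 * m) where
  toFun x := match x with
    | .inl q => ⟨2 * q.val, by omega⟩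
    | .inr q => ⟨2 * q.val + 1, by omega⟩
  invFun j := if j.val % 2 = 0 then .inl ⟨j.val / 2, by omega⟩ else .inr ⟨j.val / 2, by omega⟩
  left_inv x := by
    rcases x with q | q <;> dsimp only
    · rw [if_pos (by omega)]
      congr 1
      ext
      show 2 * q.val / 2 = q.val
      omega
    · rw [if_neg (by omega)]
      congr 1
      ext
      show (2 * q.val + 1) / 2 = q.val
      omega
  right_inv j := by
    dsimp only
    by_cases h2 : j.val % 2 = 0
    · rw [if_pos h2]
      ext
      show 2 * (j.val / 2) = j.val
      omega
    · rw [if_neg h2]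
      ext
      show 2 * (j.val / 2) + 1 = j.val
      omega

theorem xiCF_sq (n k : ℕ) (hk : k ≤ 2 ^ n) :
    xiCF (n + 1) k ^ 2 = xiCF n k + 2 := by
  have hs : sigmaCF (n + 1) k = sigmaCF n k := by rw [sigmaCF, if_pos hk]
  unfold xiCF
  rw [hs]
  set θ := Real.pi * (2 * (sigmaCF n k : ℝ) - 1) / 2 ^ (n + 1 + 1) with hθ
  have h2θ : Real.pi * (2 * (sigmaCF n k : ℝ) - 1) / 2 ^ (n + 1) = 2 * θ := by
    rw [hθ, pow_succ]
    ring
  rw [h2θ, Real.cos_two_mul]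
  ring

theorem xiCF_neg (n k : ℕ) (hk : 1 ≤ k) (hk2 : k ≤ 2 ^ n) :
    xiCF (n + 1) (k + 2 ^ n) = -xiCF (n + 1) k := by
  have hs : sigmaCF (n + 1) (k + 2 ^ n) = 2 * 2 ^ n + 1 - sigmaCF n k := by
    rw [sigmaCF, if_neg (by omega), Nat.add_sub_cancel]
  unfold xiCF
  rw [hs, sigmaCF, if_pos hk2]
  set s : ℝ := (sigmaCF n k : ℝ) with hsdef
  have hcast : ((2 * 2 ^ n + 1 - sigmaCF n k : ℤ) : ℝ) = 2 * 2 ^ n + 1 - s := by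
    push_cast
    ring
  rw [hcast]
  have hp : (2 : ℝ) ^ (n + 1 + 1) ≠ 0 := by positivity
  have hang : Real.pi * (2 * (2 * 2 ^ n + 1 - s) - 1) / 2 ^ (n + 1 + 1)
      = Real.pi - Real.pi * (2 * s - 1) / 2 ^ (n + 1 + 1) := by
    field_simp
    ring
  rw [hang, Real.cos_pi_sub]
  ring

theorem vmulT (n : ℕ) (i q : Fin (2 ^ n)) :
    (VCF n * tgenCF (2 ^ n) (2 : ℝ)) i q = (xiCF n (i.val + 1) + 2) ^ q.val := by
  set x : ℝ := xiCF n (i.val + 1) with hx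
  simp only [Matrix.mul_apply, VCF, tgenCF, Matrix.of_apply]
  set g : ℕ → ℝ := fun r => x ^ r *
    (if r ≤ q.val then ((q.val.choose r : ℕ) : ℝ) * 2 ^ (q.val - r) else 0) with hg
  rw [show (∑ k : Fin (2 ^ n), x ^ k.val *
      (if k.val ≤ q.val then ((q.val.choose k.val : ℕ) : ℝ) * 2 ^ (q.val - k.val) else 0))
      = ∑ r ∈ Finset.range (2 ^ n), g r from Fin.sum_univ_eq_sum_range g (2 ^ n)]
  rw [← Finset.sum_subset (Finset.range_subset_range.2 (Nat.succ_le_of_lt q.isLt))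
    (fun r _ hr => by
      rw [hg]; beta_reduce
      rw [if_neg (by simp only [Finset.mem_range] at hr; omega), mul_zero])]
  rw [add_pow]
  refine Finset.sum_congr rfl fun r hr => ?_
  simp only [Finset.mem_range] at hr
  rw [hg]; beta_reduce
  rw [if_pos (by omega)]
  ring

/-- For every non-negative integer `n` there exists an integer matrix `S_n` with
`det S_n = ±1` such that `V_n S_n = A_n`. -/
theorem exists_unimodular_VCF_eq_ACF (n : ℕ) :
    ∃ S : Matrix (Fin (2 ^ n)) (Fin (2 ^ n)) ℤ, (S.det = 1 ∨ S.det = -1) ∧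
      VCF n * S.map (Int.cast : ℤ → ℝ) = ACF n := by
  induction n with
  | zero =>
    refine ⟨1, Or.inl (Matrix.det_one), ?_⟩
    have h1 : (1 : Matrix (Fin (2 ^ 0)) (Fin (2 ^ 0)) ℤ).map (Int.cast : ℤ → ℝ) = 1 := by
      ext i j
      have : i = j := Fin.ext (by omega)
      subst this
      simp
    rw [h1, Matrix.mul_one]
    ext i j
    have hij : i = j := Fin.ext (by omega)
    subst hij
    show xiCF 0 (i.val + 1) ^ (i.val) = (1 : Matrix (Fin (2^0)) (Fin (2^0)) ℝ) i i
    have : i.val = 0 := by omega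
    rw [this, pow_zero, Matrix.one_apply_eq]
  | succ n ih =>
    obtain ⟨S, hdet, hVS⟩ := ih
    have hsum : 2 ^ n + 2 ^ n = 2 ^ (n + 1) := by rw [pow_succ, mul_two]
    have hmul : 2 * 2 ^ n = 2 ^ (n + 1) := by rw [pow_succ, Nat.mul_comm]
    set e : Fin (2 ^ n) ⊕ Fin (2 ^ n) ≃ Fin (2 ^ (n + 1)) :=
      finSumFinEquiv.trans (finCongr hsum) with he
    set f : Fin (2 ^ n) ⊕ Fin (2 ^ n) ≃ Fin (2 ^ (n + 1)) :=
      (itlvCF (2 ^ n)).trans (finCongr hmul) with hf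
    set Tr : Matrix (Fin (2 ^ n)) (Fin (2 ^ n)) ℝ := tgenCF (2 ^ n) (2 : ℝ) with hTr
    set B₁ : Matrix (Fin (2 ^ n)) (Fin (2 ^ n)) ℝ := VCF n * Tr with hB₁
    set B₂ : Matrix (Fin (2 ^ n)) (Fin (2 ^ n)) ℝ := DCF n * B₁ with hB₂
    have hex : ∀ i' : Fin (2 ^ n), ((e (Sum.inl i')).val = i'.val)
        ∧ ((e (Sum.inr i')).val = i'.val + 2 ^ n) := by
      intro i'
      constructor <;> simp [he, finSumFinEquiv]
    have hfy : ∀ q : Fin (2 ^ n), ((f (Sum.inl q)).val = 2 * q.val)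
        ∧ ((f (Sum.inr q)).val = 2 * q.val + 1) := by
      intro q
      constructor <;> simp [hf, itlvCF]
    -- the key factorization of V_{n+1}
    have hVfact : VCF (n + 1)
        = (Matrix.fromBlocks B₁ B₂ B₁ (-B₂)).submatrix e.symm f.symm := by
      have hblock : ∀ (x y : Fin (2 ^ n) ⊕ Fin (2 ^ n)),
          VCF (n + 1) (e x) (f y) = (Matrix.fromBlocks B₁ B₂ B₁ (-B₂)) x y := by
        intro x y
        rcases x with i' | i' <;> rcases y with q | q
        · rw [Matrix.fromBlocks_apply₁₁]
          show xiCF (n+1) ((e (Sum.inl i')).val + 1) ^ ((f (Sum.inl q)).val) = B₁ i' q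
          rw [(hex i').1, (hfy q).1, hB₁, vmulT, pow_mul,
            xiCF_sq n (i'.val + 1) (by omega)]
        · rw [Matrix.fromBlocks_apply₁₂]
          show xiCF (n+1) ((e (Sum.inl i')).val + 1) ^ ((f (Sum.inr q)).val) = B₂ i' q
          rw [(hex i').1, (hfy q).2, hB₂, DCF, Matrix.diagonal_mul, hB₁, vmulT,
            pow_succ, pow_mul, xiCF_sq n (i'.val + 1) (by omega)]
          ring
        · rw [Matrix.fromBlocks_apply₂₁]
          show xiCF (n+1) ((e (Sum.inr i')).val + 1) ^ ((f (Sum.inl q)).val) = B₁ i' q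
          have hidx : (e (Sum.inr i')).val + 1 = (i'.val + 1) + 2 ^ n := by
            have := (hex i').2; omega
          rw [hidx, (hfy q).1, xiCF_neg n (i'.val + 1) (by omega) (by omega),
            hB₁, vmulT, pow_mul, neg_sq, xiCF_sq n (i'.val + 1) (by omega)]
        · rw [Matrix.fromBlocks_apply₂₂]
          show xiCF (n+1) ((e (Sum.inr i')).val + 1) ^ ((f (Sum.inr q)).val) = (-B₂) i' q
          have hidx : (e (Sum.inr i')).val + 1 = (i'.val + 1) + 2 ^ n := by
            have := (hex i').2; omega
          rw [hidx, (hfy q).2, xiCF_neg n (i'.val + 1) (by omega) (by omega),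
            Matrix.neg_apply, hB₂, DCF, Matrix.diagonal_mul, hB₁, vmulT,
            pow_succ, pow_mul, neg_sq, xiCF_sq n (i'.val + 1) (by omega)]
          ring
      ext i j
      rw [Matrix.submatrix_apply]
      have := hblock (e.symm i) (f.symm j)
      rwa [Equiv.apply_symm_apply, Equiv.apply_symm_apply] at this
    -- the integer matrix
    set Y : Matrix (Fin (2 ^ n)) (Fin (2 ^ n)) ℤ := tgenCF (2 ^ n) (-2 : ℤ) * S with hY
    refine ⟨(Matrix.fromBlocks Y 0 0 Y).submatrix f.symm e.symm, ?_, ?_⟩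
    · -- determinant
      have hsub : (Matrix.fromBlocks Y 0 0 Y).submatrix f.symm e.symm
          = ((Matrix.fromBlocks Y 0 0 Y).submatrix f.symm f.symm).submatrix
              id (e.symm.trans f) := by
        ext i j
        simp [Matrix.submatrix_apply]
      rw [hsub, Matrix.det_permute' (e.symm.trans f), Matrix.det_submatrix_equiv_self,
        Matrix.det_fromBlocks_zero₁₂, hY, Matrix.det_mul, tgenCF_det, one_mul]
      rcases Int.units_eq_one_or (Equiv.Perm.sign (e.symm.trans f)) with hu | hu <;>
        rw [hu] <;> rcases hdet with h | h <;> rw [h] <;> norm_num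
    · -- the product equals A_{n+1}
      have hYmap : Y.map (Int.cast : ℤ → ℝ)
          = tgenCF (2 ^ n) (-2 : ℝ) * S.map (Int.cast : ℤ → ℝ) := by
        have h : (tgenCF (2 ^ n) (-2 : ℤ)).map (Int.cast : ℤ → ℝ)
            = tgenCF (2 ^ n) (-2 : ℝ) := by
          rw [tgenCF_map]; norm_num
        ext i j
        simp only [hY, Matrix.map_apply, Matrix.mul_apply]
        push_cast
        refine Finset.sum_congr rfl fun k _ => ?_
        have hk := congrFun (congrFun (congrArg (fun M => (M : Matrix _ _ ℝ)) h) i) k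
        simp only [Matrix.map_apply] at hk
        rw [hk]
      have hmap : ((Matrix.fromBlocks Y 0 0 Y).submatrix f.symm e.symm).map
            (Int.cast : ℤ → ℝ)
          = (Matrix.fromBlocks (Y.map (Int.cast : ℤ → ℝ)) 0 0
              (Y.map (Int.cast : ℤ → ℝ))).submatrix f.symm e.symm := by
        rw [← Matrix.submatrix_map, Matrix.fromBlocks_map]
        simp
      rw [hmap, hVfact, Matrix.submatrix_mul_equiv, Matrix.fromBlocks_multiply]
      have hTT : Tr * tgenCF (2 ^ n) (-2 : ℝ) = 1 := by
        rw [hTr, tgenCF_mul]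
        norm_num [tgenCF_zero]
      have h1 : B₁ * Y.map (Int.cast : ℤ → ℝ) = ACF n := by
        rw [hYmap, hB₁, Matrix.mul_assoc, ← Matrix.mul_assoc Tr, hTT, Matrix.one_mul, hVS]
      have h2 : B₂ * Y.map (Int.cast : ℤ → ℝ) = DCF n * ACF n := by
        rw [hB₂, Matrix.mul_assoc, h1]
      simp only [Matrix.mul_zero, Matrix.zero_mul, add_zero, zero_add, Matrix.neg_mul,
        h1, h2]
      show _ = ACF (n + 1)
      conv_rhs => rw [ACF]
      rw [Matrix.reindex_apply]
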